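/- Noise bound for BFV relinearization (version 2): let n ≥ 1, q, p ≥ 2, work with polynomials of degree < n reduced modulo xⁿ+1, and let δ ≥ 0 be an expansion bound valid for polynomials with real coefficients modulo xⁿ+1. Suppose ‖h₂‖ ≤ q/2 and ‖e‖ ≤ B. Then the version-2 relinearization error err₂ = −(h₂·e)/p + (⌊(h₂·b)/p⌉ − (h₂·b)/p) + (⌊(h₂·a)/p⌉ − (h₂·a)/p)·s satisfies ‖err₂‖ ≤ (q·B·δ)/p + 1/2 + (δ/2)·‖s‖. -/

import Mathlib

open Polynomial

noncomputable def pnormR (n : ℕ) (f : Polynomial ℝ) : ℝ :=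
  ⨆ i : Fin n, |f.coeff (i : ℕ)|
noncomputable def roundPoly (f : Polynomial ℝ) : Polynomial ℝ :=
  f.sum fun i a => Polynomial.C ((round a : ℤ) : ℝ) * Polynomial.X ^ i
noncomputable def toR : Polynomial ℤ →+* Polynomial ℝ :=
  Polynomial.mapRingHom (Int.castRingHom ℝ)

/-! The error is a sum of three terms, bounded separately. The key-switching noise `h₂·e/p`
is controlled by the expansion bound. The rounding error of `h₂·b/p` has coefficients of size
at most `1/2`. The rounding error of `h₂·a/p` also has coefficients at most `1/2`, and because
`h₂·a` is reduced modulo `xⁿ+1` it has degree `< n`, so the expansion bound applies once more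
to its product with `s`. -/

def IsExpansionBound (n : ℕ) (δ : ℝ) : Prop :=
  ∀ a b : ℝ[X], a.degree < n → b.degree < n →
    pnormR n ((a * b) %ₘ (X ^ n + 1)) ≤ δ * pnormR n a * pnormR n b

section pnormR

variable {n : ℕ}

lemma pnormR_nonneg (f : ℝ[X]) : 0 ≤ pnormR n f :=
  Real.iSup_nonneg fun _ => abs_nonneg _

lemma abs_coeff_le_pnormR (f : ℝ[X]) (i : Fin n) : |f.coeff i| ≤ pnormR n f :=
  le_ciSup (f := fun i : Fin n => |f.coeff i|) (Set.finite_range _).bddAbove i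

lemma pnormR_le {f : ℝ[X]} {c : ℝ} (hc : 0 ≤ c) (h : ∀ i : Fin n, |f.coeff i| ≤ c) :
    pnormR n f ≤ c :=
  Real.iSup_le h hc

lemma pnormR_add_le (f g : ℝ[X]) : pnormR n (f + g) ≤ pnormR n f + pnormR n g :=
  pnormR_le (add_nonneg (pnormR_nonneg f) (pnormR_nonneg g)) fun i => by
    rw [coeff_add]
    exact (abs_add_le _ _).trans (add_le_add (abs_coeff_le_pnormR f i) (abs_coeff_le_pnormR g i))

lemma pnormR_neg (f : ℝ[X]) : pnormR n (-f) = pnormR n f := by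
  simp [pnormR]

lemma pnormR_C_mul (c : ℝ) (f : ℝ[X]) : pnormR n (C c * f) = |c| * pnormR n f := by
  simp [pnormR, Real.mul_iSup_of_nonneg (abs_nonneg c), abs_mul]

lemma coeff_roundPoly (f : ℝ[X]) (k : ℕ) : (roundPoly f).coeff k = round (f.coeff k) := by
  simp only [roundPoly, sum_def, finsetSum_coeff, coeff_C_mul_X_pow, Finset.sum_ite_eq,
    mem_support_iff, ne_eq, ite_not]
  split_ifs with h <;> simp [h]

lemma pnormR_roundPoly_sub_le (f : ℝ[X]) : pnormR n (roundPoly f - f) ≤ 1 / 2 :=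
  pnormR_le (by norm_num) fun i => by
    rw [coeff_sub, coeff_roundPoly, abs_sub_comm]
    exact abs_sub_round _

end pnormR

lemma degree_roundPoly_le (f : ℝ[X]) : (roundPoly f).degree ≤ f.degree :=
  degree_mono fun k hk =>
    mem_support_iff.2 fun h => mem_support_iff.1 hk (by simp [coeff_roundPoly, h])

lemma degree_toR_le (f : ℤ[X]) : (toR f).degree ≤ f.degree :=
  degree_map_le

lemma degree_modByMonic_X_pow_add_one_lt {R : Type*} [CommRing R] [Nontrivial R] {n : ℕ}
    (hn : 1 ≤ n) (f : R[X]) : (f %ₘ (X ^ n + 1)).degree < n := by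
  have hM : ((X : R[X]) ^ n + 1).Monic := by simpa using monic_X_pow_add_C (1 : R) (by omega)
  exact (degree_modByMonic_lt f hM).trans_eq
    (by simpa using degree_X_pow_add_C (R := R) (by omega) 1)

namespace IsExpansionBound

variable {n : ℕ} {δ : ℝ}

lemma pnormR_C_mul_mul_modByMonic_le (hδ : IsExpansionBound n δ) (c : ℝ) {f g : ℝ[X]}
    (hf : f.degree < n) (hg : g.degree < n) :
    pnormR n (C c * ((f * g) %ₘ (X ^ n + 1))) ≤ |c| * (δ * pnormR n f * pnormR n g) := by
  rw [pnormR_C_mul]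
  exact mul_le_mul_of_nonneg_left (hδ f g hf hg) (abs_nonneg c)

lemma pnormR_roundPoly_sub_mul_modByMonic_le (hδ : IsExpansionBound n δ) (hδ0 : 0 ≤ δ)
    {f g : ℝ[X]} (hf : f.degree < n) (hg : g.degree < n) :
    pnormR n (((roundPoly f - f) * g) %ₘ (X ^ n + 1)) ≤ δ / 2 * pnormR n g := by
  have hdeg : (roundPoly f - f).degree < n :=
    (degree_sub_le _ _).trans_lt (max_lt ((degree_roundPoly_le f).trans_lt hf) hf)
  calc _ ≤ δ * pnormR n (roundPoly f - f) * pnormR n g := hδ _ _ hdeg hg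
    _ ≤ δ * (1 / 2) * pnormR n g := by
      gcongr
      · exact pnormR_nonneg g
      · exact pnormR_roundPoly_sub_le f
    _ = δ / 2 * pnormR n g := by ring

end IsExpansionBound

theorem bfv_relinearization_v2_noise_bound_general (n : ℕ) (hn : 1 ≤ n) (q p : ℕ)
    (δ : ℝ) (hδ0 : 0 ≤ δ)
    (hδ : ∀ a b : Polynomial ℝ, a.degree < (n : WithBot ℕ) → b.degree < (n : WithBot ℕ) →
      pnormR n ((a * b) %ₘ ((X : Polynomial ℝ) ^ n + 1)) ≤ δ * pnormR n a * pnormR n b)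
    (h₂ e a b s : Polynomial ℤ) (B : ℝ)
    (hd₂ : h₂.degree < (n : WithBot ℕ)) (hde : e.degree < (n : WithBot ℕ))
    (hds : s.degree < (n : WithBot ℕ))
    (hn₂ : pnormR n (toR h₂) ≤ (q : ℝ) / 2) (hne : pnormR n (toR e) ≤ B)
    (Hb Ha err₂ : Polynomial ℝ)
    (hHa : Ha = Polynomial.C ((1 : ℝ) / (p : ℝ)) *
      ((toR h₂ * toR a) %ₘ ((X : Polynomial ℝ) ^ n + 1)))
    (herr : err₂ = -(Polynomial.C ((1 : ℝ) / (p : ℝ)) *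
        ((toR h₂ * toR e) %ₘ ((X : Polynomial ℝ) ^ n + 1)))
      + (roundPoly Hb - Hb)
      + ((roundPoly Ha - Ha) * toR s) %ₘ ((X : Polynomial ℝ) ^ n + 1)) :
    pnormR n err₂ ≤ (q : ℝ) * B * δ / (p : ℝ) + 1 / 2 + δ / 2 * pnormR n (toR s) := by
  have hB : 0 ≤ B := (pnormR_nonneg _).trans hne
  have hdeg_toR {f : ℤ[X]} (hf : f.degree < n) : (toR f).degree < n :=
    (degree_toR_le f).trans_lt hf
  have hdeg_Ha : Ha.degree < n := by
    rw [hHa, ← smul_eq_C_mul]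
    exact (degree_smul_le _ _).trans_lt (degree_modByMonic_X_pow_add_one_lt hn _)
  have key_noise : pnormR n (-(C (1 / (p : ℝ)) * ((toR h₂ * toR e) %ₘ (X ^ n + 1))))
      ≤ q * B * δ / p := by
    rw [pnormR_neg]
    calc _ ≤ |1 / (p : ℝ)| * (δ * pnormR n (toR h₂) * pnormR n (toR e)) :=
          IsExpansionBound.pnormR_C_mul_mul_modByMonic_le hδ _ (hdeg_toR hd₂) (hdeg_toR hde)
      _ ≤ 1 / (p : ℝ) * (δ * (q / 2) * B) := by
          rw [abs_of_nonneg (by positivity)]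
          gcongr
          exact pnormR_nonneg _
      _ = q * B * δ / 2 / p := by ring
      _ ≤ q * B * δ / p := by gcongr; linarith [show (0 : ℝ) ≤ q * B * δ by positivity]
  have rounding_a := IsExpansionBound.pnormR_roundPoly_sub_mul_modByMonic_le hδ hδ0 hdeg_Ha
    (hdeg_toR hds)
  rw [herr]
  calc _ ≤ _ + _ + _ := (pnormR_add_le _ _).trans (add_le_add_left (pnormR_add_le _ _) _)
    _ ≤ _ := add_le_add (add_le_add key_noise (pnormR_roundPoly_sub_le Hb)) rounding_a

/-- Noise bound for BFV relinearization (version 2): with `δ` an expansion bound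
for polynomials with real coefficients modulo `xⁿ+1`, `‖h₂‖ ≤ q/2` and `‖e‖ ≤ B`,
the relinearization error
`err₂ = -(h₂·e)/p + (⌊(h₂·b)/p⌉ - (h₂·b)/p) + (⌊(h₂·a)/p⌉ - (h₂·a)/p)·s`
(products reduced modulo `xⁿ+1`) satisfies
`‖err₂‖ ≤ (q·B·δ)/p + 1/2 + (δ/2)·‖s‖`. -/
theorem bfv_relinearization_v2_noise_bound (n : ℕ) (hn : 1 ≤ n) (q p : ℕ)
    (hq : 2 ≤ q) (hp : 2 ≤ p)
    (δ : ℝ) (hδ0 : 0 ≤ δ)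
    (hδ : ∀ a b : Polynomial ℝ, a.degree < (n : WithBot ℕ) → b.degree < (n : WithBot ℕ) →
      pnormR n ((a * b) %ₘ ((X : Polynomial ℝ) ^ n + 1)) ≤ δ * pnormR n a * pnormR n b)
    (h₂ e a b s : Polynomial ℤ) (B : ℝ)
    (hd₂ : h₂.degree < (n : WithBot ℕ)) (hde : e.degree < (n : WithBot ℕ))
    (hda : a.degree < (n : WithBot ℕ)) (hdb : b.degree < (n : WithBot ℕ))
    (hds : s.degree < (n : WithBot ℕ))
    (hn₂ : pnormR n (toR h₂) ≤ (q : ℝ) / 2) (hne : pnormR n (toR e) ≤ B)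
    (Hb Ha err₂ : Polynomial ℝ)
    (hHb : Hb = Polynomial.C ((1 : ℝ) / (p : ℝ)) *
      ((toR h₂ * toR b) %ₘ ((X : Polynomial ℝ) ^ n + 1)))
    (hHa : Ha = Polynomial.C ((1 : ℝ) / (p : ℝ)) *
      ((toR h₂ * toR a) %ₘ ((X : Polynomial ℝ) ^ n + 1)))
    (herr : err₂ = -(Polynomial.C ((1 : ℝ) / (p : ℝ)) *
        ((toR h₂ * toR e) %ₘ ((X : Polynomial ℝ) ^ n + 1)))
      + (roundPoly Hb - Hb)
      + ((roundPoly Ha - Ha) * toR s) %ₘ ((X : Polynomial ℝ) ^ n + 1)) :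
    pnormR n err₂ ≤ (q : ℝ) * B * δ / (p : ℝ) + 1 / 2 + δ / 2 * pnormR n (toR s) :=
  bfv_relinearization_v2_noise_bound_general n hn q p δ hδ0 hδ h₂ e a b s B hd₂ hde hds hn₂ hne Hb
    Ha err₂ hHa herr
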